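/- arXiv:1406.7346 — 2 statements merged into one kernel-verified Lean document; each statement's English description precedes it below -/
import Mathlib

section
/- Let A = {a_0 < a_1 < a_2 < a_3} be a set of 4 integers, r = (r_0, r_1, r_2, r_3) positive integers with r_1 ≥ 2 or r_2 ≥ 2, and h an integer with 2 ≤ h ≤ r_0 + r_1 + r_2 + r_3 − 2. Then |h^{(r)}A| = L(r,h) if and only if A is a 4-term arithmetic progression. -/
open Finset

/-- A step `U → W`: some coordinate `j` decreases by 1 and coordinate `j+1` increases by 1. -/
def IsStep (k : ℕ) (U W : ℕ → ℕ) : Prop :=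
  ∃ j, j + 1 < k ∧ U j = W j + 1 ∧ W (j + 1) = U (j + 1) + 1 ∧
    ∀ i, i ≠ j → i ≠ j + 1 → W i = U i

/-- Membership in `R(r,h)`: a `k`-tuple of nonnegative integers with `x i ≤ r i` and `∑ x i = h`. -/
def InR (k : ℕ) (r : ℕ → ℕ) (h : ℕ) (x : ℕ → ℕ) : Prop :=
  (∀ i < k, x i ≤ r i) ∧ (∀ i, k ≤ i → x i = 0) ∧ ∑ i ∈ Finset.range k, x i = h

/-- The general `h`-fold sumset `h^{(r)}A` for `A = {a 0 < a 1 < ⋯ < a (k-1)}`. -/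
def genSumset (k : ℕ) (a : ℕ → ℤ) (r : ℕ → ℕ) (h : ℕ) : Set ℤ :=
  {z | ∃ s : ℕ → ℕ, (∀ i < k, s i ≤ r i) ∧ (∑ i ∈ Finset.range k, s i = h) ∧
    z = ∑ i ∈ Finset.range k, (s i : ℤ) * a i}

/-- The quantity `L(r,h)` in terms of `I`, `M`, `δ`, `θ`. -/
def Lval (k I M : ℕ) (r : ℕ → ℕ) (δ θ : ℕ) : ℤ :=
  (∑ j ∈ Finset.Ico (M + 1) k, (j : ℤ) * r j) - (∑ j ∈ Finset.range I, (j : ℤ) * r j)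
    + (M : ℤ) * θ - (I : ℤ) * δ + 1

/-- The weighted sum `S(X) = ∑ j·x j`. -/
def Sw (k : ℕ) (x : ℕ → ℕ) : ℤ := ∑ j ∈ Finset.range k, (j : ℤ) * x j

/-- An `(r,h)`-path of length `t`: `P 1 → P 2 → ⋯ → P t`, all in `R(r,h)`. -/
def IsPath (k : ℕ) (r : ℕ → ℕ) (h t : ℕ) (P : ℕ → ℕ → ℕ) : Prop :=
  (∀ i, 1 ≤ i → i ≤ t → InR k r h (P i)) ∧
  (∀ i, 1 ≤ i → i < t → IsStep k (P i) (P (i + 1)))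

/-!
A configuration `x ∈ R(r,h)` has weight `S(x) = x₁ + 2x₂ + 3x₃` and value `σ(x) = ∑ xⱼaⱼ`, and
`L(r,h) = max S - min S + 1`. Moving one unit from `aⱼ` to `aⱼ₊₁` raises the weight by one and
strictly increases the value, and such a move up (resp. down) exists from every configuration of
non-maximal (resp. non-minimal) weight. Descending from `u` and ascending from `v` thus gives
`S(u) - min S + 1` values `≤ σ(u)` and `max S - S(v) + 1` values `≥ σ(v)`: if `S(u) = S(v)` but
`σ(u) < σ(v)`, there are at least `L(r,h) + 1` values. So `|h^{(r)}A| = L(r,h)` forces `σ` to factor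
through `S`, and the weight-preserving exchanges `a₁ + a₂ ↔ a₀ + a₃` and `2a₁ ↔ a₀ + a₂` (or
`2a₂ ↔ a₁ + a₃`) make `A` an arithmetic progression. Conversely, for an arithmetic progression `σ`
is an affine function of `S`, so it takes at most `L(r,h)` values.
-/

namespace RestrictedSumset

section Chain

variable {α β : Type*} [LinearOrder β] {X : Finset α} {S : α → ℕ} {φ : α → β} {lo hi : ℕ}

theorem sub_add_one_le_card_filter_le
    (hdown : ∀ x ∈ X, lo < S x → ∃ y ∈ X, S y + 1 = S x ∧ φ y < φ x) {x : α} (hx : x ∈ X) :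
    S x - lo + 1 ≤ #((X.image φ).filter (· ≤ φ x)) := by
  induction hn : S x - lo generalizing x with
  | zero => exact card_pos.2 ⟨φ x, mem_filter.2 ⟨mem_image_of_mem φ hx, le_rfl⟩⟩
  | succ n ih =>
    obtain ⟨y, hy, hSy, hφy⟩ := hdown x hx (by omega)
    calc n + 1 + 1 ≤ #((X.image φ).filter (· ≤ φ y)) + 1 := by gcongr; exact ih hy (by omega)
      _ = #(insert (φ x) ((X.image φ).filter (· ≤ φ y))) :=
        (card_insert_of_notMem fun h => (mem_filter.1 h).2.not_gt hφy).symm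
      _ ≤ #((X.image φ).filter (· ≤ φ x)) := by
        refine card_le_card (insert_subset (mem_filter.2 ⟨mem_image_of_mem φ hx, le_rfl⟩) ?_)
        exact monotone_filter_right _ fun b _ hb => hb.trans hφy.le

theorem sub_add_one_le_card_filter_ge
    (hup : ∀ x ∈ X, S x < hi → ∃ y ∈ X, S y = S x + 1 ∧ φ x < φ y) {x : α} (hx : x ∈ X) :
    hi - S x + 1 ≤ #((X.image φ).filter (φ x ≤ ·)) := by
  refine sub_add_one_le_card_filter_le (β := βᵒᵈ) (S := fun x => hi - S x) (lo := 0)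
    (φ := fun x => OrderDual.toDual (φ x)) (fun x hx hlt => ?_) hx
  obtain ⟨y, hy, hSy, hφy⟩ := hup x hx (by omega)
  exact ⟨y, hy, by omega, hφy⟩

theorem add_two_le_card_image_of_lt
    (hdown : ∀ x ∈ X, lo < S x → ∃ y ∈ X, S y + 1 = S x ∧ φ y < φ x)
    (hup : ∀ x ∈ X, S x < hi → ∃ y ∈ X, S y = S x + 1 ∧ φ x < φ y)
    {u v : α} (hu : u ∈ X) (hv : v ∈ X) (hlo : lo ≤ S u) (hhi : S v ≤ hi) (huv : S u = S v)
    (hφ : φ u < φ v) : hi - lo + 2 ≤ #(X.image φ) := by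
  have hdisj : Disjoint ((X.image φ).filter (· ≤ φ u)) ((X.image φ).filter (φ v ≤ ·)) :=
    disjoint_filter.2 fun b _ hbu hvb => (hvb.trans hbu).not_gt hφ
  calc hi - lo + 2 = (S u - lo + 1) + (hi - S v + 1) := by omega
    _ ≤ #((X.image φ).filter (· ≤ φ u)) + #((X.image φ).filter (φ v ≤ ·)) :=
      add_le_add (sub_add_one_le_card_filter_le hdown hu) (sub_add_one_le_card_filter_ge hup hv)
    _ = #((X.image φ).filter (· ≤ φ u) ∪ (X.image φ).filter (φ v ≤ ·)) :=
      (card_union_of_disjoint hdisj).symm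
    _ ≤ #(X.image φ) := card_le_card (union_subset (filter_subset _ _) (filter_subset _ _))

theorem apply_eq_of_card_image_le
    (hdown : ∀ x ∈ X, lo < S x → ∃ y ∈ X, S y + 1 = S x ∧ φ y < φ x)
    (hup : ∀ x ∈ X, S x < hi → ∃ y ∈ X, S y = S x + 1 ∧ φ x < φ y)
    (hS : ∀ x ∈ X, lo ≤ S x ∧ S x ≤ hi) (hcard : #(X.image φ) ≤ hi - lo + 1)
    {u v : α} (hu : u ∈ X) (hv : v ∈ X) (huv : S u = S v) : φ u = φ v := by
  rcases lt_trichotomy (φ u) (φ v) with hlt | heq | hgt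
  · have := add_two_le_card_image_of_lt hdown hup hu hv (hS u hu).1 (hS v hv).2 huv hlt
    omega
  · exact heq
  · have := add_two_le_card_image_of_lt hdown hup hv hu (hS v hv).1 (hS u hu).2 huv.symm hgt
    omega

end Chain

/-- `R(r,h)` (`InR 4 r h`) with 4-tuples in place of functions. -/
def box (r₀ r₁ r₂ r₃ h : ℕ) : Finset (ℕ × ℕ × ℕ × ℕ) :=
  (range (r₀ + 1) ×ˢ range (r₁ + 1) ×ˢ range (r₂ + 1) ×ˢ range (r₃ + 1)).filter
    fun s => s.1 + s.2.1 + s.2.2.1 + s.2.2.2 = h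

/-- `Sw 4` on 4-tuples. -/
def weight (s : ℕ × ℕ × ℕ × ℕ) : ℕ := s.2.1 + 2 * s.2.2.1 + 3 * s.2.2.2

def dot (a₀ a₁ a₂ a₃ : ℤ) (s : ℕ × ℕ × ℕ × ℕ) : ℤ :=
  s.1 * a₀ + s.2.1 * a₁ + s.2.2.1 * a₂ + s.2.2.2 * a₃

/-- The `j`-th summand counts the units that cannot fit below index `j`
(truncated subtraction is intended). -/
def minWeight (r₀ r₁ r₂ h : ℕ) : ℕ := (h - r₀) + (h - (r₀ + r₁)) + (h - (r₀ + r₁ + r₂))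

def maxWeight (r₁ r₂ r₃ h : ℕ) : ℕ := min h (r₁ + r₂ + r₃) + min h (r₂ + r₃) + min h r₃

/-- `IsStep 4` on 4-tuples. -/
def Step (s t : ℕ × ℕ × ℕ × ℕ) : Prop :=
  (s.1 = t.1 + 1 ∧ t.2.1 = s.2.1 + 1 ∧ t.2.2.1 = s.2.2.1 ∧ t.2.2.2 = s.2.2.2) ∨
  (t.1 = s.1 ∧ s.2.1 = t.2.1 + 1 ∧ t.2.2.1 = s.2.2.1 + 1 ∧ t.2.2.2 = s.2.2.2) ∨
  (t.1 = s.1 ∧ t.2.1 = s.2.1 ∧ s.2.2.1 = t.2.2.1 + 1 ∧ t.2.2.2 = s.2.2.2 + 1)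

section Box

variable {r₀ r₁ r₂ r₃ h : ℕ} {a₀ a₁ a₂ a₃ : ℤ}

theorem mem_box_iff {s : ℕ × ℕ × ℕ × ℕ} :
    s ∈ box r₀ r₁ r₂ r₃ h ↔ s.1 ≤ r₀ ∧ s.2.1 ≤ r₁ ∧ s.2.2.1 ≤ r₂ ∧ s.2.2.2 ≤ r₃ ∧
      s.1 + s.2.1 + s.2.2.1 + s.2.2.2 = h := by
  simp only [box, mem_filter, mem_product, mem_range, Nat.lt_succ_iff, and_assoc]

theorem weight_mem_Icc {s : ℕ × ℕ × ℕ × ℕ} (hs : s ∈ box r₀ r₁ r₂ r₃ h) :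
    minWeight r₀ r₁ r₂ h ≤ weight s ∧ weight s ≤ maxWeight r₁ r₂ r₃ h := by
  rw [mem_box_iff] at hs
  simp only [weight, minWeight, maxWeight]
  omega

theorem minWeight_le_maxWeight (hh : h ≤ r₀ + r₁ + r₂ + r₃) :
    minWeight r₀ r₁ r₂ h ≤ maxWeight r₁ r₂ r₃ h := by
  simp only [minWeight, maxWeight]
  omega

theorem exists_mem_box_weight_eq_maxWeight (hh : h ≤ r₀ + r₁ + r₂ + r₃) :
    ∃ s ∈ box r₀ r₁ r₂ r₃ h, weight s = maxWeight r₁ r₂ r₃ h :=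
  ⟨(h - (r₁ + r₂ + r₃), min (h - (r₂ + r₃)) r₁, min (h - r₃) r₂, min h r₃),
    by simp only [mem_box_iff]; omega, by simp only [weight, maxWeight]; omega⟩

theorem box_nonempty (hh : h ≤ r₀ + r₁ + r₂ + r₃) : (box r₀ r₁ r₂ r₃ h).Nonempty :=
  let ⟨s, hs, _⟩ := exists_mem_box_weight_eq_maxWeight hh
  ⟨s, hs⟩

theorem weight_of_step {s t : ℕ × ℕ × ℕ × ℕ} (hst : Step s t) : weight t = weight s + 1 := by
  simp only [Step] at hst
  simp only [weight]
  omega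

theorem dot_lt_of_step (ha01 : a₀ < a₁) (ha12 : a₁ < a₂) (ha23 : a₂ < a₃)
    {s t : ℕ × ℕ × ℕ × ℕ} (hst : Step s t) : dot a₀ a₁ a₂ a₃ s < dot a₀ a₁ a₂ a₃ t := by
  obtain ⟨s₀, s₁, s₂, s₃⟩ := s
  obtain ⟨t₀, t₁, t₂, t₃⟩ := t
  simp only [Step, dot] at hst ⊢
  rcases hst with ⟨rfl, rfl, rfl, rfl⟩ | ⟨rfl, rfl, rfl, rfl⟩ | ⟨rfl, rfl, rfl, rfl⟩ <;>
    push_cast <;> linarith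

theorem exists_step_of_lt_maxWeight (hr1 : 0 < r₁) (hr2 : 0 < r₂)
    {s : ℕ × ℕ × ℕ × ℕ} (hs : s ∈ box r₀ r₁ r₂ r₃ h) (hlt : weight s < maxWeight r₁ r₂ r₃ h) :
    ∃ t ∈ box r₀ r₁ r₂ r₃ h, Step s t := by
  obtain ⟨s₀, s₁, s₂, s₃⟩ := s
  simp only [mem_box_iff, weight, maxWeight] at hs hlt
  by_cases c₀ : 0 < s₀ ∧ s₁ < r₁
  · exact ⟨(s₀ - 1, s₁ + 1, s₂, s₃), by simp only [mem_box_iff]; omega, by simp [Step]; omega⟩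
  by_cases c₁ : 0 < s₁ ∧ s₂ < r₂
  · exact ⟨(s₀, s₁ - 1, s₂ + 1, s₃), by simp only [mem_box_iff]; omega, by simp [Step]; omega⟩
  by_cases c₂ : 0 < s₂ ∧ s₃ < r₃
  · exact ⟨(s₀, s₁, s₂ - 1, s₃ + 1), by simp only [mem_box_iff]; omega, by simp [Step]; omega⟩
  omega

theorem exists_step_of_minWeight_lt (hr1 : 0 < r₁) (hr2 : 0 < r₂)
    {s : ℕ × ℕ × ℕ × ℕ} (hs : s ∈ box r₀ r₁ r₂ r₃ h) (hlt : minWeight r₀ r₁ r₂ h < weight s) :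
    ∃ t ∈ box r₀ r₁ r₂ r₃ h, Step t s := by
  obtain ⟨s₀, s₁, s₂, s₃⟩ := s
  simp only [mem_box_iff, weight, minWeight] at hs hlt
  by_cases c₀ : 0 < s₁ ∧ s₀ < r₀
  · exact ⟨(s₀ + 1, s₁ - 1, s₂, s₃), by simp only [mem_box_iff]; omega, by simp [Step]; omega⟩
  by_cases c₁ : 0 < s₂ ∧ s₁ < r₁
  · exact ⟨(s₀, s₁ + 1, s₂ - 1, s₃), by simp only [mem_box_iff]; omega, by simp [Step]; omega⟩
  by_cases c₂ : 0 < s₃ ∧ s₂ < r₂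
  · exact ⟨(s₀, s₁, s₂ + 1, s₃ - 1), by simp only [mem_box_iff]; omega, by simp [Step]; omega⟩
  omega

theorem exists_descent (ha01 : a₀ < a₁) (ha12 : a₁ < a₂) (ha23 : a₂ < a₃)
    (hr1 : 0 < r₁) (hr2 : 0 < r₂) :
    ∀ s ∈ box r₀ r₁ r₂ r₃ h, minWeight r₀ r₁ r₂ h < weight s →
      ∃ t ∈ box r₀ r₁ r₂ r₃ h, weight t + 1 = weight s ∧ dot a₀ a₁ a₂ a₃ t < dot a₀ a₁ a₂ a₃ s :=
  fun _ hs hlt =>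
    let ⟨t, ht, hts⟩ := exists_step_of_minWeight_lt hr1 hr2 hs hlt
    ⟨t, ht, (weight_of_step hts).symm, dot_lt_of_step ha01 ha12 ha23 hts⟩

theorem exists_ascent (ha01 : a₀ < a₁) (ha12 : a₁ < a₂) (ha23 : a₂ < a₃)
    (hr1 : 0 < r₁) (hr2 : 0 < r₂) :
    ∀ s ∈ box r₀ r₁ r₂ r₃ h, weight s < maxWeight r₁ r₂ r₃ h →
      ∃ t ∈ box r₀ r₁ r₂ r₃ h, weight t = weight s + 1 ∧ dot a₀ a₁ a₂ a₃ s < dot a₀ a₁ a₂ a₃ t :=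
  fun _ hs hlt =>
    let ⟨t, ht, hst⟩ := exists_step_of_lt_maxWeight hr1 hr2 hs hlt
    ⟨t, ht, weight_of_step hst, dot_lt_of_step ha01 ha12 ha23 hst⟩

theorem maxWeight_sub_minWeight_add_one_le_card (ha01 : a₀ < a₁) (ha12 : a₁ < a₂)
    (ha23 : a₂ < a₃) (hr1 : 0 < r₁) (hr2 : 0 < r₂) (hh : h ≤ r₀ + r₁ + r₂ + r₃) :
    maxWeight r₁ r₂ r₃ h - minWeight r₀ r₁ r₂ h + 1 ≤
      #((box r₀ r₁ r₂ r₃ h).image (dot a₀ a₁ a₂ a₃)) := by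
  obtain ⟨s, hs, hws⟩ := exists_mem_box_weight_eq_maxWeight hh
  rw [← hws]
  exact (sub_add_one_le_card_filter_le (exists_descent ha01 ha12 ha23 hr1 hr2) hs).trans
    (card_le_card (filter_subset _ _))

theorem dot_eq_of_weight_eq (ha01 : a₀ < a₁) (ha12 : a₁ < a₂) (ha23 : a₂ < a₃)
    (hr1 : 0 < r₁) (hr2 : 0 < r₂)
    (hcard : #((box r₀ r₁ r₂ r₃ h).image (dot a₀ a₁ a₂ a₃)) ≤
      maxWeight r₁ r₂ r₃ h - minWeight r₀ r₁ r₂ h + 1)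
    {u v : ℕ × ℕ × ℕ × ℕ} (hu : u ∈ box r₀ r₁ r₂ r₃ h) (hv : v ∈ box r₀ r₁ r₂ r₃ h)
    (huv : weight u = weight v) : dot a₀ a₁ a₂ a₃ u = dot a₀ a₁ a₂ a₃ v :=
  apply_eq_of_card_image_le (exists_descent ha01 ha12 ha23 hr1 hr2)
    (exists_ascent ha01 ha12 ha23 hr1 hr2) (fun _ hs => weight_mem_Icc hs) hcard hu hv huv

theorem weight_add (s t : ℕ × ℕ × ℕ × ℕ) : weight (s + t) = weight s + weight t := by
  simp only [weight, Prod.fst_add, Prod.snd_add]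
  ring

theorem dot_add (s t : ℕ × ℕ × ℕ × ℕ) :
    dot a₀ a₁ a₂ a₃ (s + t) = dot a₀ a₁ a₂ a₃ s + dot a₀ a₁ a₂ a₃ t := by
  simp only [dot, Prod.fst_add, Prod.snd_add]
  push_cast
  ring

theorem dot_eq_of_exchange
    (hrig : ∀ u ∈ box r₀ r₁ r₂ r₃ h, ∀ v ∈ box r₀ r₁ r₂ r₃ h,
      weight u = weight v → dot a₀ a₁ a₂ a₃ u = dot a₀ a₁ a₂ a₃ v)
    {t c c' : ℕ × ℕ × ℕ × ℕ} (hc : t + c ∈ box r₀ r₁ r₂ r₃ h) (hc' : t + c' ∈ box r₀ r₁ r₂ r₃ h)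
    (hw : weight c = weight c') : dot a₀ a₁ a₂ a₃ c = dot a₀ a₁ a₂ a₃ c' := by
  have := hrig _ hc _ hc' (by rw [weight_add, weight_add, hw])
  rwa [dot_add, dot_add, add_right_inj] at this

theorem isAP_of_dot_eq_of_weight_eq (hr0 : 0 < r₀) (hr1 : 0 < r₁) (hr2 : 0 < r₂) (hr3 : 0 < r₃)
    (hr12 : 2 ≤ r₁ ∨ 2 ≤ r₂) (hh2 : 2 ≤ h) (hhk : h + 2 ≤ r₀ + r₁ + r₂ + r₃)
    (hrig : ∀ u ∈ box r₀ r₁ r₂ r₃ h, ∀ v ∈ box r₀ r₁ r₂ r₃ h,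
      weight u = weight v → dot a₀ a₁ a₂ a₃ u = dot a₀ a₁ a₂ a₃ v) :
    a₁ - a₀ = a₂ - a₁ ∧ a₂ - a₁ = a₃ - a₂ := by
  obtain ⟨t, ht⟩ : (box (r₀ - 1) (r₁ - 1) (r₂ - 1) (r₃ - 1) (h - 2)).Nonempty :=
    box_nonempty (by omega)
  rw [mem_box_iff] at ht
  have e₀₃ := dot_eq_of_exchange hrig (t := t) (c := (0, 1, 1, 0)) (c' := (1, 0, 0, 1))
    (by simp only [mem_box_iff, Prod.fst_add, Prod.snd_add]; omega)
    (by simp only [mem_box_iff, Prod.fst_add, Prod.snd_add]; omega) rfl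
  simp only [dot] at e₀₃
  rcases hr12 with h2r₁ | h2r₂
  · obtain ⟨t, ht⟩ : (box (r₀ - 1) (r₁ - 2) (r₂ - 1) r₃ (h - 2)).Nonempty :=
      box_nonempty (by omega)
    rw [mem_box_iff] at ht
    have e₀₂ := dot_eq_of_exchange hrig (t := t) (c := (0, 2, 0, 0)) (c' := (1, 0, 1, 0))
      (by simp only [mem_box_iff, Prod.fst_add, Prod.snd_add]; omega)
      (by simp only [mem_box_iff, Prod.fst_add, Prod.snd_add]; omega) rfl
    simp only [dot] at e₀₂
    constructor <;> push_cast at e₀₂ e₀₃ <;> linarith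
  · obtain ⟨t, ht⟩ : (box r₀ (r₁ - 1) (r₂ - 2) (r₃ - 1) (h - 2)).Nonempty :=
      box_nonempty (by omega)
    rw [mem_box_iff] at ht
    have e₁₃ := dot_eq_of_exchange hrig (t := t) (c := (0, 0, 2, 0)) (c' := (0, 1, 0, 1))
      (by simp only [mem_box_iff, Prod.fst_add, Prod.snd_add]; omega)
      (by simp only [mem_box_iff, Prod.fst_add, Prod.snd_add]; omega) rfl
    simp only [dot] at e₁₃
    constructor <;> push_cast at e₁₃ e₀₃ <;> linarith

theorem dot_eq_of_isAP (hap₁ : a₁ - a₀ = a₂ - a₁) (hap₂ : a₂ - a₁ = a₃ - a₂)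
    {s : ℕ × ℕ × ℕ × ℕ} (hs : s ∈ box r₀ r₁ r₂ r₃ h) :
    dot a₀ a₁ a₂ a₃ s = h * a₀ + (a₁ - a₀) * weight s := by
  obtain ⟨s₀, s₁, s₂, s₃⟩ := s
  simp only [mem_box_iff] at hs
  have hsum : (s₀ : ℤ) + s₁ + s₂ + s₃ = h := by exact_mod_cast hs.2.2.2.2
  simp only [dot, weight]
  push_cast
  linear_combination a₀ * hsum - (s₂ : ℤ) * hap₁ - (s₃ : ℤ) * (hap₂ + 2 * hap₁)

theorem card_image_dot_le_of_isAP (hap₁ : a₁ - a₀ = a₂ - a₁) (hap₂ : a₂ - a₁ = a₃ - a₂) :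
    #((box r₀ r₁ r₂ r₃ h).image (dot a₀ a₁ a₂ a₃)) ≤
      maxWeight r₁ r₂ r₃ h - minWeight r₀ r₁ r₂ h + 1 :=
  calc #((box r₀ r₁ r₂ r₃ h).image (dot a₀ a₁ a₂ a₃))
      = #(((box r₀ r₁ r₂ r₃ h).image weight).image fun n : ℕ => h * a₀ + (a₁ - a₀) * n) := by
        rw [image_image]
        exact congrArg card (image_congr fun s hs => dot_eq_of_isAP hap₁ hap₂ hs)
    _ ≤ #((box r₀ r₁ r₂ r₃ h).image weight) := card_image_le
    _ ≤ #(Icc (minWeight r₀ r₁ r₂ h) (maxWeight r₁ r₂ r₃ h)) := card_le_card fun n hn => by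
        obtain ⟨s, hs, rfl⟩ := mem_image.1 hn
        exact mem_Icc.2 (weight_mem_Icc hs)
    _ ≤ maxWeight r₁ r₂ r₃ h - minWeight r₀ r₁ r₂ h + 1 := by rw [Nat.card_Icc]; omega

end Box

theorem genSumset_eq_image (r₀ r₁ r₂ r₃ h : ℕ) (a₀ a₁ a₂ a₃ : ℤ) :
    genSumset 4 (fun j => if j = 0 then a₀ else if j = 1 then a₁ else if j = 2 then a₂ else a₃)
      (fun j => if j = 0 then r₀ else if j = 1 then r₁ else if j = 2 then r₂ else r₃) h =
      ↑((box r₀ r₁ r₂ r₃ h).image (dot a₀ a₁ a₂ a₃)) := by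
  ext z
  simp only [genSumset, Set.mem_ofPred_eq, coe_image, Set.mem_image, mem_coe, mem_box_iff]
  constructor
  · rintro ⟨s, hs, hsum, rfl⟩
    refine ⟨(s 0, s 1, s 2, s 3), ⟨hs 0 ?_, hs 1 ?_, hs 2 ?_, hs 3 ?_, ?_⟩, ?_⟩ <;>
      simp_all [sum_range_succ, dot]
  · rintro ⟨⟨s₀, s₁, s₂, s₃⟩, ⟨hs₀, hs₁, hs₂, hs₃, hsum⟩, rfl⟩
    refine ⟨fun j => if j = 0 then s₀ else if j = 1 then s₁ else if j = 2 then s₂ else s₃,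
      fun j hj => ?_, ?_, ?_⟩
    · interval_cases j <;> simpa
    · simpa [sum_range_succ] using hsum
    · simp [sum_range_succ, dot]

theorem sum_range_le_iff {k : ℕ} {r : ℕ → ℕ} {h I : ℕ} (hI1 : ∑ j ∈ range I, r j ≤ h)
    (hI2 : ∀ I' ≤ k, ∑ j ∈ range I', r j ≤ h → I' ≤ I) {I' : ℕ} (hI' : I' ≤ k) :
    ∑ j ∈ range I', r j ≤ h ↔ I' ≤ I :=
  ⟨hI2 I' hI', fun hle => (sum_le_sum_of_subset (range_subset_range.2 hle)).trans hI1⟩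

theorem sum_Ico_le_iff {k : ℕ} {r : ℕ → ℕ} {h M : ℕ} (hM1 : ∑ j ∈ Ico (M + 1) k, r j ≤ h)
    (hM2 : ∀ M', ∑ j ∈ Ico (M' + 1) k, r j ≤ h → M ≤ M') (M' : ℕ) :
    ∑ j ∈ Ico (M' + 1) k, r j ≤ h ↔ M ≤ M' :=
  ⟨hM2 M', fun hle => (sum_le_sum_of_subset (Ico_subset_Ico (by omega) le_rfl)).trans hM1⟩

theorem sum_range_mul_add_eq_minWeight {h I δ r₀ r₁ r₂ r₃ : ℕ} (hh : h < r₀ + r₁ + r₂ + r₃)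
    {r : ℕ → ℕ}
    (hrdef : r = fun j => if j = 0 then r₀ else if j = 1 then r₁ else if j = 2 then r₂ else r₃)
    (hI1 : ∑ j ∈ range I, r j ≤ h) (hI2 : ∀ I' ≤ 4, ∑ j ∈ range I', r j ≤ h → I' ≤ I)
    (hδ : (δ : ℤ) = h - ∑ j ∈ range I, (r j : ℤ)) :
    ∑ j ∈ range I, (j : ℤ) * r j + I * δ = minWeight r₀ r₁ r₂ h := by
  subst hrdef
  have c₁ := sum_range_le_iff hI1 hI2 (I' := 1) (by norm_num)
  have c₂ := sum_range_le_iff hI1 hI2 (I' := 2) (by norm_num)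
  have c₃ := sum_range_le_iff hI1 hI2 (I' := 3) (by norm_num)
  have c₄ := sum_range_le_iff hI1 hI2 (I' := 4) le_rfl
  simp [sum_range_succ] at c₁ c₂ c₃ c₄
  have hI : I < 4 := by omega
  interval_cases I <;> simp [sum_range_succ] at hδ ⊢ <;> simp only [minWeight] <;> omega

theorem sum_Ico_mul_add_eq_maxWeight {h M θ r₀ r₁ r₂ r₃ : ℕ}
    {r : ℕ → ℕ}
    (hrdef : r = fun j => if j = 0 then r₀ else if j = 1 then r₁ else if j = 2 then r₂ else r₃)
    (hM1 : ∑ j ∈ Ico (M + 1) 4, r j ≤ h) (hM2 : ∀ M', ∑ j ∈ Ico (M' + 1) 4, r j ≤ h → M ≤ M')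
    (hθ : (θ : ℤ) = h - ∑ j ∈ Ico (M + 1) 4, (r j : ℤ)) :
    ∑ j ∈ Ico (M + 1) 4, (j : ℤ) * r j + M * θ = maxWeight r₁ r₂ r₃ h := by
  subst hrdef
  have c₀ := sum_Ico_le_iff hM1 hM2 0
  have c₁ := sum_Ico_le_iff hM1 hM2 1
  have c₂ := sum_Ico_le_iff hM1 hM2 2
  have c₃ := sum_Ico_le_iff hM1 hM2 3
  simp [sum_Ico_succ_top] at c₀ c₁ c₂ c₃
  have hM : M < 4 := by omega
  interval_cases M <;> simp [sum_Ico_succ_top] at hθ ⊢ <;> simp only [maxWeight] <;> omega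

end RestrictedSumset

open RestrictedSumset

theorem four_elt_eq_iff_AP_general (h I M δ θ : ℕ) (a₀ a₁ a₂ a₃ : ℤ) (r₀ r₁ r₂ r₃ : ℕ)
    (ha01 : a₀ < a₁) (ha12 : a₁ < a₂) (ha23 : a₂ < a₃)
    (hr0 : 0 < r₀) (hr1 : 0 < r₁) (hr2 : 0 < r₂) (hr3 : 0 < r₃)
    (hr12 : 2 ≤ r₁ ∨ 2 ≤ r₂)
    (hh2 : 2 ≤ h) (hhk : h + 2 ≤ r₀ + r₁ + r₂ + r₃)
    (r : ℕ → ℕ)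
    (hrdef : r = fun j => if j = 0 then r₀ else if j = 1 then r₁ else if j = 2 then r₂ else r₃)
    (a : ℕ → ℤ)
    (hadef : a = fun j => if j = 0 then a₀ else if j = 1 then a₁ else if j = 2 then a₂ else a₃)
    (hI1 : ∑ j ∈ Finset.range I, r j ≤ h)
    (hI2 : ∀ I' ≤ 4, (∑ j ∈ Finset.range I', r j ≤ h) → I' ≤ I)
    (hM1 : ∑ j ∈ Finset.Ico (M + 1) 4, r j ≤ h)
    (hM2 : ∀ M', (∑ j ∈ Finset.Ico (M' + 1) 4, r j ≤ h) → M ≤ M')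
    (hδ : (δ : ℤ) = (h : ℤ) - ∑ j ∈ Finset.range I, (r j : ℤ))
    (hθ : (θ : ℤ) = (h : ℤ) - ∑ j ∈ Finset.Ico (M + 1) 4, (r j : ℤ)) :
    ((genSumset 4 a r h).ncard : ℤ) = Lval 4 I M r δ θ ↔
      (a₁ - a₀ = a₂ - a₁ ∧ a₂ - a₁ = a₃ - a₂) := by
  have hL : Lval 4 I M r δ θ = (maxWeight r₁ r₂ r₃ h : ℤ) - minWeight r₀ r₁ r₂ h + 1 := by
    rw [Lval, ← sum_Ico_mul_add_eq_maxWeight hrdef hM1 hM2 hθ,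
      ← sum_range_mul_add_eq_minWeight (by omega) hrdef hI1 hI2 hδ]
    ring
  have hh : h ≤ r₀ + r₁ + r₂ + r₃ := by omega
  have hmin_le_max := minWeight_le_maxWeight hh
  have hlow := maxWeight_sub_minWeight_add_one_le_card (a₀ := a₀) ha01 ha12 ha23 hr1 hr2 hh
  subst hrdef hadef
  rw [genSumset_eq_image, Set.ncard_coe_finset, hL]
  constructor
  · intro hcard
    exact isAP_of_dot_eq_of_weight_eq hr0 hr1 hr2 hr3 hr12 hh2 hhk
      fun u hu v hv => dot_eq_of_weight_eq ha01 ha12 ha23 hr1 hr2 (by omega) hu hv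
  · rintro ⟨hap₁, hap₂⟩
    have := le_antisymm (card_image_dot_le_of_isAP hap₁ hap₂) hlow
    omega

theorem four_elt_eq_iff_AP (h I M δ θ : ℕ) (a₀ a₁ a₂ a₃ : ℤ) (r₀ r₁ r₂ r₃ : ℕ)
    (ha01 : a₀ < a₁) (ha12 : a₁ < a₂) (ha23 : a₂ < a₃)
    (hr0 : 0 < r₀) (hr1 : 0 < r₁) (hr2 : 0 < r₂) (hr3 : 0 < r₃)
    (hr12 : 2 ≤ r₁ ∨ 2 ≤ r₂)
    (hh2 : 2 ≤ h) (hhk : h + 2 ≤ r₀ + r₁ + r₂ + r₃)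
    (r : ℕ → ℕ)
    (hrdef : r = fun j => if j = 0 then r₀ else if j = 1 then r₁ else if j = 2 then r₂ else r₃)
    (a : ℕ → ℤ)
    (hadef : a = fun j => if j = 0 then a₀ else if j = 1 then a₁ else if j = 2 then a₂ else a₃)
    (hIk : I ≤ 4)
    (hI1 : ∑ j ∈ Finset.range I, r j ≤ h)
    (hI2 : ∀ I' ≤ 4, (∑ j ∈ Finset.range I', r j ≤ h) → I' ≤ I)
    (hM1 : ∑ j ∈ Finset.Ico (M + 1) 4, r j ≤ h)
    (hM2 : ∀ M', (∑ j ∈ Finset.Ico (M' + 1) 4, r j ≤ h) → M ≤ M')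
    (hδ : (δ : ℤ) = (h : ℤ) - ∑ j ∈ Finset.range I, (r j : ℤ))
    (hθ : (θ : ℤ) = (h : ℤ) - ∑ j ∈ Finset.Ico (M + 1) 4, (r j : ℤ)) :
    ((genSumset 4 a r h).ncard : ℤ) = Lval 4 I M r δ θ ↔
      (a₁ - a₀ = a₂ - a₁ ∧ a₂ - a₁ = a₃ - a₂) :=
  four_elt_eq_iff_AP_general h I M δ θ a₀ a₁ a₂ a₃ r₀ r₁ r₂ r₃ ha01 ha12 ha23 hr0 hr1 hr2 hr3 hr12
    hh2 hhk r hrdef a hadef hI1 hI2 hM1 hM2 hδ hθ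
end

section
/- With r = (r, r, ..., r) a constant k-tuple and m the integer with h/r − 1 < m ≤ h/r (where 1 ≤ r and r ≤ h ≤ rk), one has L((r,...,r), h) = m·r·(k−m) + (h − m·r)·(k − 2m − 1) + 1. -/
/-!
For the constant tuple, `I * r ≤ h` and `(k - (M + 1)) * r ≤ h` both compare a multiple of `r`
with `h`, so `I = m` and `M = k - (m + 1)`, and `δ = θ = h - m r` whenever `m < k`. Then the two
weighted sums in `L` run over index blocks of the same length `m`, namely `[k - m, k)` and
`[0, m)`; pairing `k - m + i` with `i` gives the difference `m r (k - m)`. When `m = k` both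
sums are `∑_{j<k} j r` (the term `j = 0` vanishes), so `L = 1`.
-/

open Finset

lemma mul_le_iff_le_of_mul_le_of_lt_add {m r h : ℕ} (hm1 : m * r ≤ h) (hm2 : h < m * r + r)
    (n : ℕ) : n * r ≤ h ↔ n ≤ m :=
  ⟨fun hn => Nat.lt_succ_iff.mp (Nat.lt_of_mul_lt_mul_right
    (show n * r < (m + 1) * r by rw [Nat.add_one_mul]; omega)),
    fun hn => (Nat.mul_le_mul_right r hn).trans hm1⟩

lemma Lval_self_zero (k : ℕ) (r : ℕ → ℕ) (θ : ℕ) : Lval k k 0 r 0 θ = 1 := by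
  rcases Nat.eq_zero_or_pos k with rfl | hk
  · simp [Lval]
  · simp [Lval, sum_range_eq_add_Ico _ hk]

lemma Lval_const_of_add_eq {k I M : ℕ} (r δ θ : ℕ) (hk : I + M + 1 = k) :
    Lval k I M (fun _ => r) δ θ = I * r * (M + 1) + M * θ - I * δ + 1 := by
  subst hk
  have hsum : ∑ j ∈ Ico (M + 1) (I + M + 1), (j : ℤ) * r - ∑ j ∈ range I, (j : ℤ) * r
      = I * r * (M + 1) := by
    have hterm : ∀ j ∈ range I, ((M + 1 + j : ℕ) : ℤ) * r - j * r = (M + 1) * r := by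
      intros; push_cast; ring
    rw [sum_Ico_eq_sum_range, show I + M + 1 - (M + 1) = I by omega,
      ← sum_sub_distrib, sum_congr rfl hterm, sum_const, card_range, nsmul_eq_mul]
    ring
  rw [Lval, hsum]

theorem Lval_uniform_formula_general (k r h m I M δ θ : ℕ)
    (hhk : h ≤ r * k)
    (hm1 : m * r ≤ h) (hm2 : h < m * r + r)
    (hI1 : ∑ j ∈ Finset.range I, (fun _ => r) j ≤ h)
    (hI2 : ∀ I' ≤ k, (∑ j ∈ Finset.range I', (fun _ => r) j ≤ h) → I' ≤ I)
    (hM1 : ∑ j ∈ Finset.Ico (M + 1) k, (fun _ => r) j ≤ h)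
    (hM2 : ∀ M', (∑ j ∈ Finset.Ico (M' + 1) k, (fun _ => r) j ≤ h) → M ≤ M')
    (hδ : (δ : ℤ) = (h : ℤ) - ∑ j ∈ Finset.range I, ((fun _ => r) j : ℤ))
    (hθ : (θ : ℤ) = (h : ℤ) - ∑ j ∈ Finset.Ico (M + 1) k, ((fun _ => r) j : ℤ)) :
    Lval k I M (fun _ => r) δ θ
      = (m : ℤ) * r * ((k : ℤ) - m) + ((h : ℤ) - (m : ℤ) * r) * ((k : ℤ) - 2 * m - 1) + 1 := by
  simp only [sum_const, card_range, Nat.card_Ico, smul_eq_mul, nsmul_eq_mul]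
    at hI1 hI2 hM1 hM2 hδ hθ
  have hle_iff := mul_le_iff_le_of_mul_le_of_lt_add hm1 hm2
  have hr : 0 < r := Nat.pos_of_ne_zero (by rintro rfl; simp at hm2)
  have hmk : m ≤ k := Nat.le_of_mul_le_mul_right (hm1.trans (by rwa [mul_comm])) hr
  obtain rfl : I = m := le_antisymm ((hle_iff I).mp hI1) (hI2 m hmk hm1)
  obtain rfl : M = k - (I + 1) := by
    have hkM : k - (M + 1) ≤ I := (hle_iff _).mp hM1
    exact le_antisymm (hM2 _ ((hle_iff _).mpr (by omega))) (by omega)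
  rcases hmk.lt_or_eq with hlt | rfl
  · rw [Lval_const_of_add_eq r δ θ (by omega), hδ, hθ, show k - (k - (I + 1) + 1) = I by omega]
    push_cast [Nat.cast_sub (show I + 1 ≤ k by omega)]
    ring
  · obtain rfl : h = I * r := le_antisymm (by rwa [mul_comm]) hm1
    obtain rfl : δ = 0 := by push_cast at hδ; omega
    rw [show I - (I + 1) = 0 by omega, Lval_self_zero]
    push_cast
    ring

theorem Lval_uniform_formula (k r h m I M δ θ : ℕ)
    (hr : 1 ≤ r) (hrh : r ≤ h) (hhk : h ≤ r * k)
    (hm1 : m * r ≤ h) (hm2 : h < m * r + r)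
    (hIk : I ≤ k)
    (hI1 : ∑ j ∈ Finset.range I, (fun _ => r) j ≤ h)
    (hI2 : ∀ I' ≤ k, (∑ j ∈ Finset.range I', (fun _ => r) j ≤ h) → I' ≤ I)
    (hM1 : ∑ j ∈ Finset.Ico (M + 1) k, (fun _ => r) j ≤ h)
    (hM2 : ∀ M', (∑ j ∈ Finset.Ico (M' + 1) k, (fun _ => r) j ≤ h) → M ≤ M')
    (hδ : (δ : ℤ) = (h : ℤ) - ∑ j ∈ Finset.range I, ((fun _ => r) j : ℤ))
    (hθ : (θ : ℤ) = (h : ℤ) - ∑ j ∈ Finset.Ico (M + 1) k, ((fun _ => r) j : ℤ)) :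
    Lval k I M (fun _ => r) δ θ
      = (m : ℤ) * r * ((k : ℤ) - m) + ((h : ℤ) - (m : ℤ) * r) * ((k : ℤ) - 2 * m - 1) + 1 :=
  Lval_uniform_formula_general k r h m I M δ θ hhk hm1 hm2 hI1 hI2 hM1 hM2 hδ hθ
end
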